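/- Suppose W is a symmetric positive semidefinite p×p real matrix partitioned as W = [[W₁, W₂],[W₂ᵀ, W₃]] whose top-left n×n block W₁ is positive definite, μ ∈ ℝ, and Θ₁(W, μ) ⪯ 0. Set K = W₂ᵀW₁⁻¹ and P = W₁⁻¹. Then P is symmetric positive definite and (A − B₂K)ᵀP + P(A − B₂K) + μ·PB₁B₁ᵀP + CᵀC + KᵀDᵀDK ⪯ 0. -/
import Mathlib


open Matrix

/-- The extended matrix `F = [[A, −B₂],[0, 0]]`. -/
noncomputable def Fmat {n m : ℕ} (A : Matrix (Fin n) (Fin n) ℝ) (B₂ : Matrix (Fin n) (Fin m) ℝ) :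
    Matrix (Fin n ⊕ Fin m) (Fin n ⊕ Fin m) ℝ :=
  Matrix.fromBlocks A (-B₂) 0 0

/-- The extended matrix `Q = [[B₁B₁ᵀ, 0],[0, 0]]`. -/
noncomputable def Qmat {n m l : ℕ} (B₁ : Matrix (Fin n) (Fin l) ℝ) :
    Matrix (Fin n ⊕ Fin m) (Fin n ⊕ Fin m) ℝ :=
  Matrix.fromBlocks (B₁ * B₁ᵀ) 0 0 0

/-- The extended matrix `R = [[CᵀC, 0],[0, DᵀD]]`. -/
noncomputable def Rmat {n m q : ℕ} (C : Matrix (Fin q) (Fin n) ℝ) (D : Matrix (Fin q) (Fin m) ℝ) :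
    Matrix (Fin n ⊕ Fin m) (Fin n ⊕ Fin m) ℝ :=
  Matrix.fromBlocks (Cᵀ * C) 0 0 (Dᵀ * D)

/-- `Θ₁(W, μ)`: the top-left `n × n` block of `Θ(W, μ) = FW + WFᵀ + WRW + μQ`. -/
noncomputable def Theta1 {n m l q : ℕ} (A : Matrix (Fin n) (Fin n) ℝ) (B₂ : Matrix (Fin n) (Fin m) ℝ)
    (B₁ : Matrix (Fin n) (Fin l) ℝ) (C : Matrix (Fin q) (Fin n) ℝ) (D : Matrix (Fin q) (Fin m) ℝ)
    (W : Matrix (Fin n ⊕ Fin m) (Fin n ⊕ Fin m) ℝ) (μ : ℝ) : Matrix (Fin n) (Fin n) ℝ :=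
  (Fmat A B₂ * W + W * (Fmat A B₂)ᵀ + W * Rmat C D * W + μ • Qmat (m := m) B₁).toBlocks₁₁

/-- If `W = [[W₁, W₂],[W₂ᵀ, W₃]]` is symmetric PSD with `W₁` positive definite
and `Θ₁(W, μ) ⪯ 0`, then with `K = W₂ᵀW₁⁻¹` and `P = W₁⁻¹`, the matrix `P` is symmetric positive
definite and `(A − B₂K)ᵀP + P(A − B₂K) + μ·PB₁B₁ᵀP + CᵀC + KᵀDᵀDK ⪯ 0`. -/
theorem stmt_4 (n m l q : ℕ) (A : Matrix (Fin n) (Fin n) ℝ) (B₂ : Matrix (Fin n) (Fin m) ℝ)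
    (B₁ : Matrix (Fin n) (Fin l) ℝ) (C : Matrix (Fin q) (Fin n) ℝ) (D : Matrix (Fin q) (Fin m) ℝ)
    (W₁ : Matrix (Fin n) (Fin n) ℝ) (W₂ : Matrix (Fin n) (Fin m) ℝ) (W₃ : Matrix (Fin m) (Fin m) ℝ)
    (W : Matrix (Fin n ⊕ Fin m) (Fin n ⊕ Fin m) ℝ) (hW : W = Matrix.fromBlocks W₁ W₂ W₂ᵀ W₃)
    (hWsymm : W.IsSymm) (hWpsd : W.PosSemidef) (hW₁ : W₁.PosDef) (μ : ℝ)
    (hΘ : (-(Theta1 A B₂ B₁ C D W μ)).PosSemidef)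
    (K : Matrix (Fin m) (Fin n) ℝ) (hK : K = W₂ᵀ * W₁⁻¹)
    (P : Matrix (Fin n) (Fin n) ℝ) (hP : P = W₁⁻¹) :
    (P.IsSymm ∧ P.PosDef) ∧
      (-((A - B₂ * K)ᵀ * P + P * (A - B₂ * K) + μ • (P * B₁ * B₁ᵀ * P)
          + Cᵀ * C + Kᵀ * Dᵀ * D * K)).PosSemidef := by
  have hdet : IsUnit W₁.det := isUnit_iff_ne_zero.mpr (ne_of_gt hW₁.det_pos)
  have hWP : W₁ * P = 1 := by rw [hP]; exact Matrix.mul_nonsing_inv _ hdet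
  have hPW : P * W₁ = 1 := by rw [hP]; exact Matrix.nonsing_inv_mul _ hdet
  have hPpd : P.PosDef := hP ▸ hW₁.inv
  have hPsymm : P.IsSymm := hPpd.isHermitian
  have hPt : Pᵀ = P := hPsymm
  have hPH : Pᴴ = P := hPpd.isHermitian
  have hPW' : ∀ X : Matrix (Fin n) (Fin n) ℝ, P * (W₁ * X) = X := fun X => by
    rw [← Matrix.mul_assoc, hPW, Matrix.one_mul]
  have hK' : K = W₂ᵀ * P := by rw [hK, hP]
  have hΘ1 : Theta1 A B₂ B₁ C D W μ =
      A * W₁ - B₂ * W₂ᵀ + (W₁ * Aᵀ - W₂ * B₂ᵀ)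
        + (W₁ * (Cᵀ * C) * W₁ + W₂ * (Dᵀ * D) * W₂ᵀ) + μ • (B₁ * B₁ᵀ) := by
    subst hW
    simp [Theta1, Fmat, Qmat, Rmat, Matrix.fromBlocks_multiply, Matrix.fromBlocks_transpose,
      Matrix.fromBlocks_add, Matrix.fromBlocks_smul, Matrix.toBlocks_fromBlocks₁₁,
      Matrix.neg_mul, Matrix.mul_neg, sub_eq_add_neg, Matrix.mul_assoc]
  have key : (A - B₂ * K)ᵀ * P + P * (A - B₂ * K) + μ • (P * B₁ * B₁ᵀ * P)
        + Cᵀ * C + Kᵀ * Dᵀ * D * K = P * Theta1 A B₂ B₁ C D W μ * P := by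
    rw [hΘ1, hK']
    simp only [Matrix.transpose_sub, Matrix.transpose_mul, Matrix.transpose_transpose, hPt,
      Matrix.mul_add, Matrix.add_mul, Matrix.mul_sub, Matrix.sub_mul,
      Matrix.mul_smul, Matrix.smul_mul, Matrix.mul_assoc, hWP, Matrix.mul_one, hPW']
    abel
  refine ⟨⟨hPsymm, hPpd⟩, ?_⟩
  rw [key]
  have := hΘ.conjTranspose_mul_mul_same P
  rwa [hPH, Matrix.mul_neg, Matrix.neg_mul] at this
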